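/- The three vector fields v₁ = ∂_{p₂} − z₂∂_{q₂} + 4y₂∂_{z₂}, v₂ = ∂_{q₂}, v₃ = ∂_{z₂} on ℝ⁴ with coordinates (y₂,p₂,q₂,z₂), together with v₄ = p₂∂_{p₂} + 2q₂∂_{q₂} + z₂∂_{z₂} and v₅ = 3y₂∂_{p₂} + 4p₂∂_{q₂}, annihilate the function I(y₂,p₂,q₂,z₂) = y₂, and at a generic point the span of v₁,…,v₅ has dimension 3; consequently y₂ is the unique invariant up to functional dependence (any smooth function annihilated by all five fields is locally a function of y₂). -/

import Mathlib

/- ℝ⁴ with coordinates (y₂,p₂,q₂,z₂) = indices (0,1,2,3). -/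

/-- The five vector fields generating the stabilizer action on the fiber of 2-jets. -/
noncomputable def stabVF : Fin 5 → (Fin 4 → ℝ) → (Fin 4 → ℝ) :=
  ![fun a => ![0, 1, -(a 3), 4 * a 0],        -- ∂p₂ − z₂∂q₂ + 4y₂∂z₂
    fun _ => ![0, 0, 1, 0],                    -- ∂q₂
    fun _ => ![0, 0, 0, 1],                    -- ∂z₂
    fun a => ![0, a 1, 2 * a 2, a 3],          -- p₂∂p₂ + 2q₂∂q₂ + z₂∂z₂
    fun a => ![0, 3 * a 0, 4 * a 1, 0]]        -- 3y₂∂p₂ + 4p₂∂q₂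

lemma stabVF_zero (a : Fin 4 → ℝ) (i : Fin 5) : stabVF i a 0 = 0 := by
  fin_cases i <;> simp [stabVF, Matrix.vecHead, Matrix.vecTail]

lemma single_one : (Pi.single (1 : Fin 4) (1:ℝ)) = ![0,1,0,0] := by
  funext j; fin_cases j <;> simp [Pi.single_apply]

lemma single_two : (Pi.single (2 : Fin 4) (1:ℝ)) = ![0,0,1,0] := by
  funext j; fin_cases j <;> simp [Pi.single_apply]

lemma single_three : (Pi.single (3 : Fin 4) (1:ℝ)) = ![0,0,0,1] := by
  funext j; fin_cases j <;> simp [Pi.single_apply]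

/-- Any vector with vanishing 0-coordinate is killed by fderiv f, given invariance. -/
lemma key (f : (Fin 4 → ℝ) → ℝ)
    (hf : ∀ (a : Fin 4 → ℝ) (i : Fin 5), fderiv ℝ f a (stabVF i a) = 0)
    (a v : Fin 4 → ℝ) (hv : v 0 = 0) : fderiv ℝ f a v = 0 := by
  set L := fderiv ℝ f a with hL
  have h1 : L ![0,0,1,0] = 0 := hf a 1
  have h2 : L ![0,0,0,1] = 0 := hf a 2
  have h0 : L ![0,1,0,0] = 0 := by
    have h := hf a 0
    have hdecomp : (stabVF 0 a) = ![0,1,0,0] + (-(a 3)) • ![0,0,1,0] + (4 * a 0) • ![0,0,0,1] := by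
      funext j; fin_cases j <;> simp [stabVF, Matrix.vecHead, Matrix.vecTail] <;> ring
    rw [hdecomp] at h
    simp only [map_add, map_smul, h1, h2, smul_zero, add_zero] at h
    simpa only [← hL, h1, h2, smul_zero, add_zero] using h
  have hvdecomp : v = v 1 • ![0,1,0,0] + v 2 • ![0,0,1,0] + v 3 • ![0,0,0,1] := by
    funext j; fin_cases j <;> simp [hv]
  rw [hvdecomp]
  simp only [map_add, map_smul, h0, h1, h2, smul_zero, add_zero]

/-- The vector fields annihilate y₂; generically their span is 3-dimensional;
and any smooth invariant function is locally a function of y₂ alone. -/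
theorem stabilizer_invariant_y2 :
    (∀ (a : Fin 4 → ℝ) (i : Fin 5),
      fderiv ℝ (fun b : Fin 4 → ℝ => b 0) a (stabVF i a) = 0) ∧
    Dense {a : Fin 4 → ℝ |
      Module.finrank ℝ (Submodule.span ℝ
        ({stabVF 0 a, stabVF 1 a, stabVF 2 a, stabVF 3 a, stabVF 4 a} :
          Set (Fin 4 → ℝ))) = 3} ∧
    (∀ f : (Fin 4 → ℝ) → ℝ, ContDiff ℝ (⊤ : ℕ∞) f →
      (∀ (a : Fin 4 → ℝ) (i : Fin 5), fderiv ℝ f a (stabVF i a) = 0) →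
      ∀ a : Fin 4 → ℝ, ∃ U ∈ nhds a, ∃ g : ℝ → ℝ, ∀ b ∈ U, f b = g (b 0)) := by
  refine ⟨?_, ?_, ?_⟩
  · -- part 1
    intro a i
    have hder : fderiv ℝ (fun b : Fin 4 → ℝ => b 0) a
        = (ContinuousLinearMap.proj 0 : (Fin 4 → ℝ) →L[ℝ] ℝ) :=
      (ContinuousLinearMap.proj (R := ℝ) (φ := fun _ : Fin 4 => ℝ) 0).fderiv
    rw [hder]
    exact stabVF_zero a i
  · -- part 2
    have hset : {a : Fin 4 → ℝ |
        Module.finrank ℝ (Submodule.span ℝ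
          ({stabVF 0 a, stabVF 1 a, stabVF 2 a, stabVF 3 a, stabVF 4 a} :
            Set (Fin 4 → ℝ))) = 3} = Set.univ := by
      ext a
      simp only [Set.mem_setOf_eq, Set.mem_univ, iff_true]
      set b : Fin 3 → (Fin 4 → ℝ) := fun j => Pi.single (j.succ) 1 with hb
      have hbrange : Set.range b = {![0,1,0,0], ![0,0,1,0], ![0,0,0,1]} := by
        ext x
        constructor
        · rintro ⟨j, rfl⟩
          fin_cases j <;>
            simp [hb, single_one, single_two, single_three, Fin.succ]
        · rintro (rfl | rfl | rfl)
          · exact ⟨0, by simp [hb, single_one, Fin.succ]⟩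
          · exact ⟨1, by simp [hb, single_two, Fin.succ]⟩
          · exact ⟨2, by simp [hb, single_three, Fin.succ]⟩
      have hspan : Submodule.span ℝ
          ({stabVF 0 a, stabVF 1 a, stabVF 2 a, stabVF 3 a, stabVF 4 a} :
            Set (Fin 4 → ℝ)) = Submodule.span ℝ (Set.range b) := by
        rw [hbrange]
        apply le_antisymm
        · rw [Submodule.span_le]
          intro x hx
          have m1 : (![0,1,0,0] : Fin 4 → ℝ) ∈ Submodule.span ℝ
              ({![0,1,0,0], ![0,0,1,0], ![0,0,0,1]} : Set (Fin 4 → ℝ)) :=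
            Submodule.subset_span (by simp)
          have m2 : (![0,0,1,0] : Fin 4 → ℝ) ∈ Submodule.span ℝ
              ({![0,1,0,0], ![0,0,1,0], ![0,0,0,1]} : Set (Fin 4 → ℝ)) :=
            Submodule.subset_span (by simp)
          have m3 : (![0,0,0,1] : Fin 4 → ℝ) ∈ Submodule.span ℝ
              ({![0,1,0,0], ![0,0,1,0], ![0,0,0,1]} : Set (Fin 4 → ℝ)) :=
            Submodule.subset_span (by simp)
          rcases hx with rfl | rfl | rfl | rfl | rfl
          · have : stabVF 0 a = ![0,1,0,0] + (-(a 3)) • ![0,0,1,0] + (4 * a 0) • ![0,0,0,1] := by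
              funext j; fin_cases j <;> simp [stabVF, Matrix.vecHead, Matrix.vecTail] <;> ring
            rw [this]
            exact Submodule.add_mem _ (Submodule.add_mem _ m1 (Submodule.smul_mem _ _ m2))
              (Submodule.smul_mem _ _ m3)
          · exact m2
          · exact m3
          · have : stabVF 3 a = (a 1) • ![0,1,0,0] + (2 * a 2) • ![0,0,1,0] + (a 3) • ![0,0,0,1] := by
              funext j; fin_cases j <;> simp [stabVF, Matrix.vecHead, Matrix.vecTail]
            rw [this]
            exact Submodule.add_mem _ (Submodule.add_mem _ (Submodule.smul_mem _ _ m1)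
              (Submodule.smul_mem _ _ m2)) (Submodule.smul_mem _ _ m3)
          · have : stabVF 4 a = (3 * a 0) • ![0,1,0,0] + (4 * a 1) • ![0,0,1,0] := by
              funext j; fin_cases j <;> simp [stabVF, Matrix.vecHead, Matrix.vecTail]
            rw [this]
            exact Submodule.add_mem _ (Submodule.smul_mem _ _ m1) (Submodule.smul_mem _ _ m2)
        · rw [Submodule.span_le]
          intro x hx
          have m2 : (![0,0,1,0] : Fin 4 → ℝ) ∈ Submodule.span ℝ
              ({stabVF 0 a, stabVF 1 a, stabVF 2 a, stabVF 3 a, stabVF 4 a} :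
                Set (Fin 4 → ℝ)) := Submodule.subset_span (by
              have : stabVF 1 a = ![0,0,1,0] := rfl
              simp [← this])
          have m3 : (![0,0,0,1] : Fin 4 → ℝ) ∈ Submodule.span ℝ
              ({stabVF 0 a, stabVF 1 a, stabVF 2 a, stabVF 3 a, stabVF 4 a} :
                Set (Fin 4 → ℝ)) := Submodule.subset_span (by
              have : stabVF 2 a = ![0,0,0,1] := rfl
              simp [← this])
          have m0 : (stabVF 0 a) ∈ Submodule.span ℝ
              ({stabVF 0 a, stabVF 1 a, stabVF 2 a, stabVF 3 a, stabVF 4 a} :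
                Set (Fin 4 → ℝ)) := Submodule.subset_span (by simp)
          have m1 : (![0,1,0,0] : Fin 4 → ℝ) ∈ Submodule.span ℝ
              ({stabVF 0 a, stabVF 1 a, stabVF 2 a, stabVF 3 a, stabVF 4 a} :
                Set (Fin 4 → ℝ)) := by
            have : (![0,1,0,0] : Fin 4 → ℝ)
                = stabVF 0 a + (a 3) • ![0,0,1,0] + (-(4 * a 0)) • ![0,0,0,1] := by
              funext j; fin_cases j <;> simp [stabVF, Matrix.vecHead, Matrix.vecTail] <;> ring
            rw [this]
            exact Submodule.add_mem _ (Submodule.add_mem _ m0 (Submodule.smul_mem _ _ m2))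
              (Submodule.smul_mem _ _ m3)
          rcases hx with rfl | rfl | rfl
          · exact m1
          · exact m2
          · exact m3
      rw [hspan]
      have hbeq : b = ⇑(Pi.basisFun ℝ (Fin 4)) ∘ (fun j : Fin 3 => j.succ) := by
        funext j; simp [hb, Pi.basisFun_apply]
      have hli : LinearIndependent ℝ b := by
        rw [hbeq]
        exact (Pi.basisFun ℝ (Fin 4)).linearIndependent.comp
          (fun j : Fin 3 => j.succ) (Fin.succ_injective 3)
      rw [finrank_span_eq_card hli]
      simp
    rw [hset]
    exact dense_univ
  · -- part 3
    intro f hsm hf a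
    have hdiff : Differentiable ℝ f := hsm.differentiable (by simp)
    have hconst : ∀ b c : Fin 4 → ℝ, b 0 = c 0 → f b = f c := by
      intro b c hbc
      set w : Fin 4 → ℝ := c - b with hw
      have hw0 : w 0 = 0 := by simp [hw, hbc]
      have hφ : ∀ s : ℝ, HasDerivAt (fun s : ℝ => f (b + s • w)) 0 s := by
        intro s
        have hg : HasDerivAt (fun s : ℝ => b + s • w) w s := by
          simpa using ((hasDerivAt_id s).smul_const w).const_add b
        have := ((hdiff (b + s • w)).hasFDerivAt).comp_hasDerivAt s hg
        rw [key f hf (b + s • w) w hw0] at this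
        exact this
      have hφd : Differentiable ℝ (fun s : ℝ => f (b + s • w)) := fun s => (hφ s).differentiableAt
      have hφ0 : ∀ s, deriv (fun s : ℝ => f (b + s • w)) s = 0 := fun s => (hφ s).deriv
      have := is_const_of_deriv_eq_zero hφd hφ0 0 1
      simpa [hw] using this
    refine ⟨Set.univ, Filter.univ_mem, fun t => f (Pi.single 0 t), fun b _ => ?_⟩
    exact hconst b (Pi.single 0 (b 0)) (by simp)
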